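/- Let (C^1, …, C^k) be an admissible family in ℝ^n and let Q ⊆ ℝ^n × ℝ^k be a closed convex set with Q ⊆ ℝ^n × Δ^k such that for all (x, y) ∈ ℝ^n × ℝ^k with all coordinates of y integers: (x, y) ∈ Q if and only if there exists i ∈ {1,…,k} with y = e^i and x ∈ C^i. Then: (1) Q(C^1,…,C^k) ⊆ Q; (2) rec(Q) = rec(Q(C^1,…,C^k)) = rec(C^1) × {0}; (3) for every ȳ ∈ Δ^k and x̄ ∈ Σ_{i=1}^k ȳ_i • C^i one has (x̄, ȳ) ∈ Q; and (4) the following are equivalent: (i) Q = Q(C^1,…,C^k); (ii) for every ȳ ∈ Δ^k and every x̄, (x̄, ȳ) ∈ Q implies x̄ ∈ Σ_{i=1}^k ȳ_i • C^i; (iii) for every x̄, (x̄, (1/k)·𝟏) ∈ Q implies x̄ ∈ (1/k) • (C^1 + … + C^k), where 𝟏 ∈ ℝ^k is the all-ones vector. -/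

import Mathlib

/-!
The key fact is that `Q(C¹,…,Cᵏ)`, the set of `(x, y)` with `y ∈ Δᵏ` and
`x ∈ ∑ i, y i • Cⁱ`, is closed. If `∑ i, aₘᵢ • vₘᵢ → z` with `vₘᵢ ∈ Cⁱ` and `aₘ → y`, then after
projecting along the common lineality space the summands `aₘᵢ • vₘᵢ` stay bounded: normalised,
they would tend to recession directions summing to zero. Their limits lie in `y i • Cⁱ` when
`y i > 0` and in the common recession cone otherwise, and a summand with positive weight absorbs
recession directions.

Recession directions of `Q` cannot move the bounded simplex coordinate, so they stay over a
vertex `eⁱ`, where `Q` is `Cⁱ`. If `(x, y) ∈ Q` and `t • y + z` is the centre of `Δᵏ`, convexity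
puts `t • x + ∑ i, z i • Cⁱ` into the central slice `(1/k) • ∑ Cⁱ = t • ∑ i, y i • Cⁱ +
∑ i, z i • Cⁱ`. For positive `y` a separating functional cancels `∑ i, z i • Cⁱ`; the boundary of
`Δᵏ` follows by closedness.
-/

open Pointwise Set

noncomputable section

/-- The recession cone of a set. -/
def recCone {E : Type*} [AddCommGroup E] [Module ℝ E] (S : Set E) : Set E :=
  {d | ∀ x ∈ S, ∀ t : ℝ, 0 ≤ t → x + t • d ∈ S}

/-- An admissible family: each member is a nonempty closed convex set and all members share
the same recession cone. -/
def Admissible {n k : ℕ} (C : Fin k → Set (Fin n → ℝ)) : Prop :=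
  (∀ i, (C i).Nonempty) ∧ (∀ i, IsClosed (C i)) ∧ (∀ i, Convex ℝ (C i)) ∧
    ∀ i j, recCone (C i) = recCone (C j)

/-- The Cayley embedding `Q(C¹,…,Cᵏ) = conv(⋃ᵢ Cⁱ × {eⁱ})`. -/
def CayleyQ {n k : ℕ} (C : Fin k → Set (Fin n → ℝ)) :
    Set ((Fin n → ℝ) × (Fin k → ℝ)) :=
  convexHull ℝ (⋃ i, (C i) ×ˢ ({Pi.single i 1} : Set (Fin k → ℝ)))

open Filter Topology

section RecessionCone

variable {E : Type*} [AddCommGroup E] [Module ℝ E]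

def recessionCone (S : Set E) : PointedCone ℝ E where
  carrier := recCone S
  add_mem' {d₁ d₂} h₁ h₂ x hx t ht := by
    simpa only [smul_add, add_assoc] using h₂ _ (h₁ x hx t ht) t ht
  zero_mem' x hx t _ := by simpa using hx
  smul_mem' c d hd x hx t ht :=
    show x + t • ((c : ℝ) • d) ∈ S by
      simpa only [mul_smul] using hd x hx (t * c) (mul_nonneg ht c.2)

lemma mem_recessionCone {S : Set E} {d : E} : d ∈ recessionCone S ↔ d ∈ recCone S := Iff.rfl

lemma add_mem_of_mem_recCone {S : Set E} {x d : E} (hx : x ∈ S) (hd : d ∈ recCone S) :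
    x + d ∈ S := by
  simpa using hd x hx 1 zero_le_one

lemma PointedCone.mem_lineal_of_sum_eq_zero {ι : Type*} [Fintype ι] {K : PointedCone ℝ E}
    {d : ι → E} (hd : ∀ i, d i ∈ K) (hsum : ∑ i, d i = 0) (i : ι) : d i ∈ K.lineal := by
  classical
  rw [← Finset.add_sum_erase _ _ (Finset.mem_univ i), add_eq_zero_iff_eq_neg'] at hsum
  refine PointedCone.mem_lineal.2 ⟨hd i, ?_⟩
  rw [← hsum]
  exact K.sum_mem fun j _ => hd j

end RecessionCone

section Rays

variable {E : Type*} [NormedAddCommGroup E] [NormedSpace ℝ E] {S : Set E}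

lemma mem_recCone_of_forall_add_smul_mem (hconv : Convex ℝ S) (hcl : IsClosed S) {p d : E}
    (h : ∀ t : ℝ, 0 ≤ t → p + t • d ∈ S) : d ∈ recCone S := by
  intro x hx t ht
  -- `x + t • d` is the limit of points on the segment from `x` to `p + s • d` as `s → ∞`
  have hlim : Tendsto (fun s : ℝ => x + t • d + (t / s) • (p - x)) atTop (𝓝 (x + t • d)) := by
    simpa using tendsto_const_nhds.add
      (((tendsto_const_nhds (x := t)).div_atTop tendsto_id).smul_const (p - x))
  refine hcl.mem_of_tendsto hlim ?_
  filter_upwards [eventually_gt_atTop 0, eventually_ge_atTop t] with s hs hts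
  have hθ : t / s ≤ 1 := (div_le_one hs).2 hts
  have hmem := hconv hx (h s hs.le) (sub_nonneg.2 hθ) (div_nonneg ht hs.le) (by ring)
  convert hmem using 1
  have : (t / s) • s • d = t • d := by rw [smul_smul, div_mul_cancel₀ t hs.ne']
  rw [smul_add, this, sub_smul, one_smul, smul_sub]
  abel

lemma mem_recCone_of_tendsto_smul {α : Type*} {l : Filter α} [l.NeBot] (hconv : Convex ℝ S)
    (hcl : IsClosed S) (hne : S.Nonempty) {τ : α → ℝ} {v : α → E} {d : E}
    (hτ₀ : ∀ m, 0 ≤ τ m) (hτ : Tendsto τ l (𝓝 0)) (hv : ∀ m, v m ∈ S)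
    (hd : Tendsto (fun m => τ m • v m) l (𝓝 d)) : d ∈ recCone S := by
  obtain ⟨x₀, hx₀⟩ := hne
  refine mem_recCone_of_forall_add_smul_mem hconv hcl (p := x₀) fun t ht => ?_
  have hlim : Tendsto (fun m => (1 - t * τ m) • x₀ + t • (τ m • v m)) l (𝓝 (x₀ + t • d)) := by
    simpa using (((tendsto_const_nhds (x := (1 : ℝ))).sub (hτ.const_mul t)).smul_const x₀).add
      (hd.const_smul t)
  refine hcl.mem_of_tendsto hlim ?_
  have hsmall : ∀ᶠ m in l, t * τ m ≤ 1 :=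
    (hτ.const_mul t).eventually (eventually_le_nhds (by simp))
  filter_upwards [hsmall] with m hm
  rw [smul_smul]
  exact hconv hx₀ (hv m) (sub_nonneg.2 hm) (mul_nonneg ht (hτ₀ m)) (by ring)

lemma eq_zero_of_forall_add_smul_mem_of_isBounded (hS : Bornology.IsBounded S) {x d : E}
    (h : ∀ t : ℝ, 0 ≤ t → x + t • d ∈ S) : d = 0 := by
  obtain ⟨R, hR⟩ := isBounded_iff_forall_norm_le.1 hS
  by_contra hd
  have hpos : 0 < ‖d‖ := norm_pos_iff.2 hd
  set t := (R + ‖x‖ + 1) / ‖d‖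
  have ht : t * ‖d‖ = R + ‖x‖ + 1 := div_mul_cancel₀ _ hpos.ne'
  have h₁ : 0 ≤ R := (norm_nonneg _).trans (hR _ (h 0 le_rfl))
  have h₂ : ‖t • d‖ ≤ ‖x + t • d‖ + ‖x‖ := by
    simpa using norm_sub_le (x + t • d) x
  rw [norm_smul, Real.norm_of_nonneg (by positivity), ht] at h₂
  linarith [hR _ (h t (by positivity))]

end Rays

section MinkowskiSum

variable {E ι : Type*} [Fintype ι]

section Algebra

variable [AddCommGroup E] [Module ℝ E] {C : ι → Set E}

lemma mem_sum_smul_iff {b : ι → ℝ} {x : E} :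
    x ∈ ∑ i, b i • C i ↔ ∃ v : ι → E, (∀ i, v i ∈ C i) ∧ ∑ i, b i • v i = x := by
  rw [Set.mem_fintype_sum]
  constructor
  · rintro ⟨g, hg, rfl⟩
    choose v hv hvg using hg
    exact ⟨v, hv, Finset.sum_congr rfl fun i _ => hvg i⟩
  · rintro ⟨v, hv, rfl⟩
    exact ⟨fun i => b i • v i, fun i => smul_mem_smul_set (hv i), rfl⟩

lemma sum_smul_nonempty (hne : ∀ i, (C i).Nonempty) (b : ι → ℝ) :
    (∑ i, b i • C i).Nonempty := by
  choose v hv using hne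
  exact ⟨_, mem_sum_smul_iff.2 ⟨v, hv, rfl⟩⟩

lemma add_mem_smul_set_of_mem_recCone {S : Set E} {b : ℝ} (hb : 0 < b) {y d : E}
    (hy : y ∈ b • S) (hd : d ∈ recCone S) : y + d ∈ b • S := by
  obtain ⟨c, hc, rfl⟩ := hy
  refine ⟨c + b⁻¹ • d, add_mem_of_mem_recCone hc
    ((recessionCone S).smul_mem (inv_nonneg.2 hb.le) hd), ?_⟩
  simp [smul_add, smul_inv_smul₀ hb.ne']

lemma add_mem_sum_smul_of_mem_recCone {b : ι → ℝ} {i₀ : ι} (hb : 0 < b i₀) {x d : E}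
    (hx : x ∈ ∑ i, b i • C i) (hd : d ∈ recCone (C i₀)) : x + d ∈ ∑ i, b i • C i := by
  classical
  rw [← Finset.add_sum_erase _ _ (Finset.mem_univ i₀)] at hx ⊢
  obtain ⟨y, hy, r, hr, rfl⟩ := hx
  rw [add_right_comm]
  exact add_mem_add (add_mem_smul_set_of_mem_recCone hb hy hd) hr

variable {F : Type*} [FunLike F E ℝ] [LinearMapClass F ℝ E ℝ] (f : F)

lemma bddAbove_image_sum_smul {b : ι → ℝ} (hb : ∀ i, 0 ≤ b i)
    (h : ∀ i, BddAbove (f '' C i)) : BddAbove (f '' ∑ i, b i • C i) := by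
  choose M hM using h
  refine ⟨∑ i, b i * M i, ?_⟩
  rintro _ ⟨x, hx, rfl⟩
  obtain ⟨v, hv, rfl⟩ := mem_sum_smul_iff.1 hx
  simp only [map_sum, map_smul, smul_eq_mul]
  exact Finset.sum_le_sum fun i _ => mul_le_mul_of_nonneg_left (hM i ⟨v i, hv i, rfl⟩) (hb i)

lemma bddAbove_image_of_bddAbove_image_sum_smul (hne : ∀ i, (C i).Nonempty) {b : ι → ℝ}
    {i : ι} (hb : 0 < b i) (h : BddAbove (f '' ∑ j, b j • C j)) : BddAbove (f '' C i) := by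
  classical
  obtain ⟨M, hM⟩ := h
  choose p hp using hne
  set r := ∑ j ∈ Finset.univ.erase i, b j • p j
  have hr : r ∈ ∑ j ∈ Finset.univ.erase i, b j • C j :=
    Set.finsetSum_mem_finsetSum _ _ _ fun j _ => smul_mem_smul_set (hp j)
  refine ⟨(M - f r) / b i, ?_⟩
  rintro _ ⟨ξ, hξ, rfl⟩
  have hmem : b i • ξ + r ∈ ∑ j, b j • C j := by
    rw [← Finset.add_sum_erase _ _ (Finset.mem_univ i)]
    exact add_mem_add (smul_mem_smul_set hξ) hr
  have hle := hM ⟨_, hmem, rfl⟩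
  rw [map_add, map_smul, smul_eq_mul] at hle
  rw [le_div_iff₀ hb]
  linarith

end Algebra

section Topology

variable [NormedAddCommGroup E] [NormedSpace ℝ E] {C : ι → Set E}

lemma mem_of_forall_add_mem_add {A B : Set E} (hAc : IsClosed A) (hAconv : Convex ℝ A)
    (hB : B.Nonempty) (hbdd : ∀ f : E →L[ℝ] ℝ, BddAbove (f '' A) → BddAbove (f '' B))
    {x : E} (hx : ∀ b ∈ B, x + b ∈ A + B) : x ∈ A := by
  by_contra hxA
  obtain ⟨f, u, hfA, hux⟩ := geometric_hahn_banach_closed_point hAconv hAc hxA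
  have hfB := hbdd f ⟨u, by rintro _ ⟨a, ha, rfl⟩; exact (hfA a ha).le⟩
  -- choose `b` whose value is within `f x - u` of `sup f(B)`
  obtain ⟨_, ⟨b, hb, rfl⟩, hfb⟩ :=
    exists_lt_of_lt_csSup (hB.image f) (sub_lt_self (sSup (f '' B)) (sub_pos.2 hux))
  obtain ⟨a, ha, b', hb', hab⟩ := hx b hb
  have hsum := congrArg f hab
  rw [map_add, map_add] at hsum
  linarith [hfA a ha, le_csSup hfB ⟨b', hb', rfl⟩]

lemma exists_eq_smul_add_of_tendsto {S : Set E} (hne : S.Nonempty) (hcl : IsClosed S)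
    (hconv : Convex ℝ S) {a : ℕ → ℝ} {β : ℝ} {v : ℕ → E} {g : E} (ha : ∀ m, 0 ≤ a m)
    (haβ : Tendsto a atTop (𝓝 β)) (hv : ∀ m, v m ∈ S)
    (hg : Tendsto (fun m => a m • v m) atTop (𝓝 g)) :
    ∃ c ∈ S, ∃ d ∈ recCone S, g = β • c + d := by
  rcases (ge_of_tendsto' haβ ha).eq_or_lt with hβ | hβ
  · obtain ⟨c, hc⟩ := hne
    exact ⟨c, hc, g, mem_recCone_of_tendsto_smul hconv hcl ⟨c, hc⟩ ha (hβ ▸ haβ) hv hg,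
      by simp [← hβ]⟩
  · refine ⟨β⁻¹ • g, ?_, 0, (recessionCone S).zero_mem, by simp [smul_inv_smul₀ hβ.ne']⟩
    refine hcl.mem_of_tendsto ((haβ.inv₀ hβ.ne').smul hg) ?_
    filter_upwards [haβ.eventually (eventually_gt_nhds hβ)] with m hm
    simpa [inv_smul_smul₀ hm.ne'] using hv m

variable (hne : ∀ i, (C i).Nonempty) (hcl : ∀ i, IsClosed (C i))
  (hconv : ∀ i, Convex ℝ (C i)) {K : PointedCone ℝ E} (hK : ∀ i, recessionCone (C i) = K)
  {a : ℕ → ι → ℝ} {b : ι → ℝ} (ha : ∀ m i, 0 ≤ a m i) (hab : Tendsto a atTop (𝓝 b))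
  {v : ℕ → ι → E} (hv : ∀ m i, v m i ∈ C i)
include hne hcl hconv hK ha hab hv

lemma sum_mem_sum_smul_of_tendsto {i₀ : ι} (hb : 0 < b i₀) {g : ι → E}
    (hg : Tendsto (fun m i => a m i • v m i) atTop (𝓝 g)) : ∑ i, g i ∈ ∑ i, b i • C i := by
  choose c hc d hd hgcd using fun i => exists_eq_smul_add_of_tendsto (hne i) (hcl i) (hconv i)
    (fun m => ha m i) (tendsto_pi_nhds.1 hab i) (fun m => hv m i) (tendsto_pi_nhds.1 hg i)
  have hdK : ∑ i, d i ∈ recCone (C i₀) := by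
    rw [← mem_recessionCone, hK]
    exact K.sum_mem fun i _ => hK i ▸ mem_recessionCone.2 (hd i)
  simp_rw [hgcd, Finset.sum_add_distrib]
  exact add_mem_sum_smul_of_mem_recCone hb (mem_sum_smul_iff.2 ⟨c, hc, rfl⟩) hdK

variable [FiniteDimensional ℝ E]

lemma not_tendsto_norm_atTop {q : Submodule ℝ E} (hq : Disjoint K.lineal q)
    (hvq : ∀ m i, v m i ∈ q) {z : E} (hz : Tendsto (fun m => ∑ i, a m i • v m i) atTop (𝓝 z)) :
    ¬ Tendsto (fun m => ‖fun i => a m i • v m i‖) atTop atTop := by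
  intro hT
  set w : ℕ → ι → E := fun m i => a m i • v m i
  set u : ℕ → ι → E := fun m => ‖w m‖⁻¹ • w m
  have hu : ∀ᶠ m in atTop, u m ∈ Metric.sphere 0 1 := by
    filter_upwards [hT.eventually_gt_atTop 0] with m hm
    rw [mem_sphere_zero_iff_norm, norm_smul, norm_inv, norm_norm]
    exact inv_mul_cancel₀ hm.ne'
  obtain ⟨d, hd, ψ, hψ, hud⟩ :=
    tendsto_subseq_of_frequently_bounded Metric.isBounded_sphere hu.frequently
  rw [Metric.isClosed_sphere.closure_eq, mem_sphere_zero_iff_norm] at hd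
  have hinv : Tendsto (fun m => ‖w (ψ m)‖⁻¹) atTop (𝓝 0) :=
    tendsto_inv_atTop_zero.comp (hT.comp hψ.tendsto_atTop)
  have hdi : ∀ i, Tendsto (fun m => u (ψ m) i) atTop (𝓝 (d i)) := tendsto_pi_nhds.1 hud
  have hdK : ∀ i, d i ∈ K := fun i => by
    rw [← hK i, mem_recessionCone]
    refine mem_recCone_of_tendsto_smul (l := atTop) (hconv i) (hcl i) (hne i)
      (τ := fun m => ‖w (ψ m)‖⁻¹ * a (ψ m) i)
      (fun m => mul_nonneg (inv_nonneg.2 (norm_nonneg _)) (ha _ i)) ?_ (fun m => hv (ψ m) i) ?_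
    · simpa using hinv.mul ((tendsto_pi_nhds.1 hab i).comp hψ.tendsto_atTop)
    · simpa [u, w, mul_smul] using hdi i
  have hsum : ∑ i, d i = 0 := by
    refine tendsto_nhds_unique (tendsto_finsetSum _ fun i _ => hdi i) ?_
    simpa [u, w, Finset.smul_sum] using hinv.smul (hz.comp hψ.tendsto_atTop)
  have hd0 : d = 0 := funext fun i => by
    have hdq : d i ∈ q := q.closed_of_finiteDimensional.mem_of_tendsto (hdi i)
      (Eventually.of_forall fun m => q.smul_mem _ (q.smul_mem _ (hvq _ i)))
    exact Submodule.disjoint_def.1 hq _ (K.mem_lineal_of_sum_eq_zero hdK hsum i) hdq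
  simp [hd0] at hd

theorem mem_sum_smul_of_tendsto {i₀ : ι} (hb : 0 < b i₀) {z : E}
    (hz : Tendsto (fun m => ∑ i, a m i • v m i) atTop (𝓝 z)) : z ∈ ∑ i, b i • C i := by
  -- projecting along the lineality space keeps each `C i` and makes the cone pointed on the image
  obtain ⟨q, hLq⟩ := K.lineal.exists_isCompl
  set π := q.projection K.lineal hLq.symm
  have hπL : ∀ x, x - π x ∈ K.lineal := Submodule.sub_projection_mem hLq.symm
  have hπC : ∀ i, ∀ x ∈ C i, π x ∈ C i := fun i x hx => by
    simpa using add_mem_of_mem_recCone hx (d := -(x - π x))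
      (by rw [← mem_recessionCone, hK i]; exact (hπL x).2)
  have hπz : Tendsto (fun m => ∑ i, a m i • π (v m i)) atTop (𝓝 (π z)) := by
    simpa [Function.comp_def, map_sum, map_smul] using
      (π.continuous_of_finiteDimensional.tendsto z).comp hz
  obtain ⟨R, hR⟩ : ∃ R, ∃ᶠ m in atTop, ‖fun i => a m i • π (v m i)‖ ≤ R := by
    have := not_tendsto_norm_atTop hne hcl hconv hK ha hab (fun m i => hπC i _ (hv m i))
      hLq.disjoint (fun m i => Submodule.projection_apply_mem hLq.symm _) hπz
    obtain ⟨R, hR⟩ := not_forall.1 (mt tendsto_atTop.2 this)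
    exact ⟨R, (not_eventually.1 hR).mono fun _ h => (not_le.1 h).le⟩
  obtain ⟨g, -, ψ, hψ, hg⟩ := tendsto_subseq_of_frequently_bounded
    (Metric.isBounded_closedBall (x := 0) (r := R))
    (hR.mono fun _ h => mem_closedBall_zero_iff.2 h)
  have hπzg : π z = ∑ i, g i := tendsto_nhds_unique (hπz.comp hψ.tendsto_atTop)
    (tendsto_finsetSum _ fun i _ => (continuous_apply i).continuousAt.tendsto.comp hg)
  have hmem := sum_mem_sum_smul_of_tendsto hne hcl hconv hK (fun m => ha (ψ m))
    (hab.comp hψ.tendsto_atTop) (fun m i => hπC i _ (hv (ψ m) i)) hb hg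
  rw [← hπzg] at hmem
  simpa using add_mem_sum_smul_of_mem_recCone hb hmem (d := z - π z)
    (by rw [← mem_recessionCone, hK]; exact (hπL z).1)

end Topology

end MinkowskiSum

section CayleySet

variable {E ι : Type*} [Fintype ι]

section Algebra

variable [AddCommGroup E] [Module ℝ E] {C : ι → Set E}

variable (C) in
def cayleySet : Set (E × (ι → ℝ)) :=
  {p | p.2 ∈ stdSimplex ℝ ι ∧ p.1 ∈ ∑ i, p.2 i • C i}

lemma convex_cayleySet (hconv : ∀ i, Convex ℝ (C i)) : Convex ℝ (cayleySet C) := by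
  rintro ⟨x, y⟩ ⟨hy, hx : x ∈ ∑ i, y i • C i⟩ ⟨x', y'⟩ ⟨hy', hx' : x' ∈ ∑ i, y' i • C i⟩
    α β hα hβ hαβ
  refine ⟨convex_stdSimplex ℝ ι hy hy' hα hβ hαβ,
    show α • x + β • x' ∈ ∑ i, (α • y + β • y') i • C i from ?_⟩
  have hsplit : ∑ i, (α • y + β • y') i • C i =
      α • ∑ i, y i • C i + β • ∑ i, y' i • C i := by
    simp_rw [Finset.smul_sum, smul_smul, ← Finset.sum_add_distrib]
    exact Finset.sum_congr rfl fun i _ =>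
      (hconv i).add_smul (mul_nonneg hα (hy.1 i)) (mul_nonneg hβ (hy'.1 i))
  rw [hsplit]
  exact add_mem_add (smul_mem_smul_set hx) (smul_mem_smul_set hx')

variable [DecidableEq ι]

lemma sum_smul_mk_single (z : ι → ℝ) (c : ι → E) :
    ∑ i, z i • (c i, (Pi.single i 1 : ι → ℝ)) = (∑ i, z i • c i, z) := by
  ext
  · simp [Prod.fst_sum]
  · simp [Prod.snd_sum, ← Pi.single_smul]

lemma convexHull_iUnion_prod_single (hne : ∀ i, (C i).Nonempty) (hconv : ∀ i, Convex ℝ (C i)) :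
    convexHull ℝ (⋃ i, C i ×ˢ {(Pi.single i 1 : ι → ℝ)}) = cayleySet C := by
  refine (convexHull_min ?_ (convex_cayleySet hconv)).antisymm ?_
  · simp only [iUnion_subset_iff, prod_subset_iff, mem_singleton_iff]
    rintro i x hx _ rfl
    refine ⟨single_mem_stdSimplex ℝ i, mem_sum_smul_iff.2 ?_⟩
    choose p hp using hne
    refine ⟨Function.update p i x, fun j => ?_, ?_⟩
    · rcases eq_or_ne j i with rfl | hj
      · simpa using hx
      · simpa [hj] using hp j
    · simp [Pi.single_apply, ite_smul]
  · rintro ⟨x, y⟩ ⟨hy, hx : x ∈ ∑ i, y i • C i⟩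
    obtain ⟨c, hc, rfl⟩ := mem_sum_smul_iff.1 hx
    rw [← sum_smul_mk_single]
    exact (convex_convexHull ℝ _).sum_mem (fun i _ => hy.1 i) hy.2 fun i _ =>
      subset_convexHull ℝ _ (mem_iUnion.2 ⟨i, mk_mem_prod (hc i) rfl⟩)

end Algebra

variable [NormedAddCommGroup E] [NormedSpace ℝ E] [FiniteDimensional ℝ E] {C : ι → Set E}
  (hne : ∀ i, (C i).Nonempty) (hcl : ∀ i, IsClosed (C i)) (hconv : ∀ i, Convex ℝ (C i))
  {K : PointedCone ℝ E} (hK : ∀ i, recessionCone (C i) = K)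
include hne hcl hconv hK

theorem isClosed_cayleySet : IsClosed (cayleySet C) := by
  refine IsSeqClosed.isClosed fun p pₗ hp hlim => ?_
  have hlim₂ := (continuous_snd.tendsto _).comp hlim
  have hΔ : pₗ.2 ∈ stdSimplex ℝ ι :=
    (isClosed_stdSimplex ℝ ι).mem_of_tendsto hlim₂ (Eventually.of_forall fun m => (hp m).1)
  obtain ⟨i₀, -, hi₀⟩ := Finset.exists_lt_of_sum_lt (s := Finset.univ) (f := fun _ => (0 : ℝ))
    (g := pₗ.2) (by rw [hΔ.2]; simp)
  choose v hv hvs using fun m => mem_sum_smul_iff.1 (hp m).2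
  refine ⟨hΔ, mem_sum_smul_of_tendsto hne hcl hconv hK (fun m i => (hp m).1.1 i) hlim₂ hv hi₀ ?_⟩
  exact (tendsto_congr hvs).2 ((continuous_fst.tendsto pₗ).comp hlim)

lemma isClosed_sum_smul {y : ι → ℝ} (hy : y ∈ stdSimplex ℝ ι) : IsClosed (∑ i, y i • C i) := by
  have hslice : ∑ i, y i • C i = (fun x => (x, y)) ⁻¹' cayleySet C := by
    ext x; simp [cayleySet, hy]
  rw [hslice]
  exact (isClosed_cayleySet hne hcl hconv hK).preimage (Continuous.prodMk_left y)

end CayleySet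

section Formulation

variable {E ι : Type*} [DecidableEq ι] {C : ι → Set E} {Q : Set (E × (ι → ℝ))}

lemma mk_single_mem_iff_of_int (hQint : ∀ (x : E) (y : ι → ℝ), (∀ i, ∃ z : ℤ, y i = z) →
      ((x, y) ∈ Q ↔ ∃ i, y = Pi.single i 1 ∧ x ∈ C i)) (i : ι) (x : E) :
    (x, Pi.single i 1) ∈ Q ↔ x ∈ C i := by
  rw [hQint x _ fun j => ⟨(Pi.single i 1 : ι → ℤ) j, by
    rw [Pi.single_apply, Pi.single_apply]; split_ifs <;> simp⟩]
  refine ⟨?_, fun hx => ⟨i, rfl, hx⟩⟩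
  rintro ⟨j, hj, hx⟩
  obtain rfl : i = j := by simpa [Pi.single_apply] using congrFun hj i
  exact hx

section Algebra

variable [AddCommGroup E] [Module ℝ E] (hQconv : Convex ℝ Q)
  (hQC : ∀ i x, (x, Pi.single i 1) ∈ Q ↔ x ∈ C i)
include hQconv hQC

lemma convexHull_iUnion_prod_single_subset :
    convexHull ℝ (⋃ i, C i ×ˢ {(Pi.single i 1 : ι → ℝ)}) ⊆ Q := by
  refine convexHull_min ?_ hQconv
  simp only [iUnion_subset_iff, prod_subset_iff, mem_singleton_iff]
  rintro i x hx _ rfl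
  exact (hQC i x).2 hx

variable [Fintype ι]

lemma smul_add_mk_sum_smul_mem {p : E × (ι → ℝ)} (hp : p ∈ Q) {t : ℝ} (ht : 0 ≤ t)
    {z : ι → ℝ} (hz : ∀ i, 0 ≤ z i) (hsum : t + ∑ i, z i = 1) {c : ι → E}
    (hc : ∀ i, c i ∈ C i) : t • p + (∑ i, z i • c i, z) ∈ Q := by
  have := hQconv.sum_mem (t := Finset.univ) (w := fun o : Option ι => o.elim t z)
    (z := fun o => o.elim p fun i => (c i, Pi.single i 1))
    (by rintro (_ | i) - <;> simp [ht, hz]) (by simpa [Fintype.sum_option] using hsum)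
    (by rintro (_ | i) - <;> simp [hp, hQC, hc])
  simpa only [Fintype.sum_option, Option.elim_none, Option.elim_some, sum_smul_mk_single]
    using this

lemma eq_convexHull_iff_forall_mem_sum_smul (hne : ∀ i, (C i).Nonempty)
    (hconv : ∀ i, Convex ℝ (C i)) (hQΔ : Q ⊆ Prod.snd ⁻¹' stdSimplex ℝ ι) :
    Q = convexHull ℝ (⋃ i, C i ×ˢ {(Pi.single i 1 : ι → ℝ)}) ↔
      ∀ y ∈ stdSimplex ℝ ι, ∀ x, (x, y) ∈ Q → x ∈ ∑ i, y i • C i := by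
  have hsub := convexHull_iUnion_prod_single_subset hQconv hQC
  rw [convexHull_iUnion_prod_single hne hconv] at hsub ⊢
  refine ⟨?_, fun h => subset_antisymm (fun p hp => ⟨hQΔ hp, h _ (hQΔ hp) _ hp⟩) hsub⟩
  rintro rfl y - x hx
  exact hx.2

end Algebra

section RecessionCone

variable [Fintype ι] [NormedAddCommGroup E] [NormedSpace ℝ E] {S : Set (E × (ι → ℝ))} {i : ι}
  (hS : ∀ x ∈ C i, (x, Pi.single i 1) ∈ S) (hne : (C i).Nonempty)
include hS hne

lemma recCone_subset_prod_zero (hSQ : S ⊆ Q) (hQΔ : Q ⊆ Prod.snd ⁻¹' stdSimplex ℝ ι)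
    (hQC : ∀ x, (x, Pi.single i 1) ∈ Q ↔ x ∈ C i) : recCone S ⊆ recCone (C i) ×ˢ {0} := by
  rintro ⟨d, w⟩ hdw
  obtain ⟨x₀, hx₀⟩ := hne
  obtain rfl : w = 0 := eq_zero_of_forall_add_smul_mem_of_isBounded (bounded_stdSimplex ι)
    (x := Pi.single i 1) fun t ht => hQΔ (hSQ (hdw _ (hS x₀ hx₀) t ht))
  refine ⟨fun x hx t ht => (hQC _).1 ?_, rfl⟩
  simpa using hSQ (hdw _ (hS x hx) t ht)

lemma prod_zero_subset_recCone (hSc : IsClosed S) (hSconv : Convex ℝ S) :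
    recCone (C i) ×ˢ {0} ⊆ recCone S := by
  rintro ⟨d, w⟩ ⟨hd, hw⟩
  rw [mem_singleton_iff] at hw
  subst hw
  obtain ⟨x₀, hx₀⟩ := hne
  refine mem_recCone_of_forall_add_smul_mem hSconv hSc (p := (x₀, Pi.single i 1)) fun t ht => ?_
  simpa using hS _ (hd x₀ hx₀ t ht)

lemma recCone_eq_prod_zero (hSc : IsClosed S) (hSconv : Convex ℝ S) (hSQ : S ⊆ Q)
    (hQΔ : Q ⊆ Prod.snd ⁻¹' stdSimplex ℝ ι) (hQC : ∀ x, (x, Pi.single i 1) ∈ Q ↔ x ∈ C i) :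
    recCone S = recCone (C i) ×ˢ {0} :=
  (recCone_subset_prod_zero hS hne hSQ hQΔ hQC).antisymm
    (prod_zero_subset_recCone hS hne hSc hSconv)

end RecessionCone

section Slices

variable [Fintype ι] [NormedAddCommGroup E] [NormedSpace ℝ E] [FiniteDimensional ℝ E]
  (hne : ∀ i, (C i).Nonempty) (hcl : ∀ i, IsClosed (C i)) (hconv : ∀ i, Convex ℝ (C i))
  {K : PointedCone ℝ E} (hK : ∀ i, recessionCone (C i) = K)
  (hQconv : Convex ℝ Q) (hQC : ∀ i x, (x, Pi.single i 1) ∈ Q ↔ x ∈ C i)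
  {y₀ : ι → ℝ} (hy₀ : ∀ i, 0 < y₀ i) (hy₀Δ : y₀ ∈ stdSimplex ℝ ι)
  (h₀ : ∀ x, (x, y₀) ∈ Q → x ∈ ∑ i, y₀ i • C i)
include hne hcl hconv hK hQconv hQC hy₀ hy₀Δ h₀

lemma mem_sum_smul_of_forall_pos {x : E} {y : ι → ℝ} (hy : ∀ i, 0 < y i)
    (hyΔ : y ∈ stdSimplex ℝ ι) (hxy : (x, y) ∈ Q) : x ∈ ∑ i, y i • C i := by
  obtain ⟨i₁, -, -⟩ := Finset.exists_ne_zero_of_sum_ne_zero (hy₀Δ.2.symm ▸ one_ne_zero)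
  have : Nonempty ι := ⟨i₁⟩
  obtain ⟨i₀, hi₀⟩ := Finite.exists_min y₀
  obtain ⟨t, ht, hty₀⟩ : ∃ t > 0, ∀ i, t ≤ y₀ i := ⟨y₀ i₀, hy₀ i₀, hi₀⟩
  set z : ι → ℝ := fun i => y₀ i - t * y i
  have hz : ∀ i, 0 ≤ z i := fun i => sub_nonneg.2 <|
    (mul_le_of_le_one_right ht.le (mem_Icc_of_mem_stdSimplex hyΔ i).2).trans (hty₀ i)
  have hsplit : ∑ i, y₀ i • C i = t • ∑ i, y i • C i + ∑ i, z i • C i := by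
    rw [Finset.smul_sum, ← Finset.sum_add_distrib]
    refine Finset.sum_congr rfl fun i _ => ?_
    rw [smul_smul, ← (hconv i).add_smul (mul_nonneg ht.le (hy i).le) (hz i)]
    simp [z]
  rw [← smul_mem_smul_set_iff₀ ht.ne']
  refine mem_of_forall_add_mem_add
    ((isClosed_sum_smul hne hcl hconv hK hyΔ).smul_of_ne_zero ht.ne')
    ((convex_sum _ fun i _ => (hconv i).smul (y i)).smul t) (sum_smul_nonempty hne z)
    (fun f hf => ?_) fun b hb => ?_
  · rw [Finset.smul_sum] at hf
    simp_rw [smul_smul] at hf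
    exact bddAbove_image_sum_smul f hz fun i =>
      bddAbove_image_of_bddAbove_image_sum_smul f hne (mul_pos ht (hy i)) hf
  · obtain ⟨c, hc, rfl⟩ := mem_sum_smul_iff.1 hb
    rw [← hsplit]
    refine h₀ _ ?_
    have hsum : t + ∑ i, z i = 1 := by
      simp only [z, Finset.sum_sub_distrib, ← Finset.mul_sum, hy₀Δ.2, hyΔ.2]
      ring
    have hpt : t • (x, y) + (∑ i, z i • c i, z) = (t • x + ∑ i, z i • c i, y₀) :=
      Prod.ext rfl (funext fun i => by simp [z])
    rw [← hpt]
    exact smul_add_mk_sum_smul_mem hQconv hQC hxy ht.le hz hsum hc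

theorem mem_sum_smul_of_mem (hQΔ : Q ⊆ Prod.snd ⁻¹' stdSimplex ℝ ι) {x : E} {y : ι → ℝ}
    (hy : y ∈ stdSimplex ℝ ι) (hxy : (x, y) ∈ Q) : x ∈ ∑ i, y i • C i := by
  obtain ⟨x₀, hx₀⟩ := sum_smul_nonempty hne y₀
  have hx₀Q : (x₀, y₀) ∈ Q := by
    refine convexHull_iUnion_prod_single_subset hQconv hQC ?_
    rw [convexHull_iUnion_prod_single hne hconv]
    exact ⟨hy₀Δ, hx₀⟩
  -- on the open segment towards `(x₀, y₀)` all weights are positive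
  have hseg : openSegment ℝ (x, y) (x₀, y₀) ⊆ cayleySet C := by
    rintro _ ⟨α, β, hα, hβ, hαβ, rfl⟩
    have hpQ := hQconv hxy hx₀Q hα.le hβ.le hαβ
    refine ⟨hQΔ hpQ, mem_sum_smul_of_forall_pos hne hcl hconv hK hQconv hQC hy₀ hy₀Δ h₀
      (fun i => ?_) (hQΔ hpQ) hpQ⟩
    exact add_pos_of_nonneg_of_pos (mul_nonneg hα.le (hy.1 i)) (mul_pos hβ (hy₀ i))
  exact ((isClosed_cayleySet hne hcl hconv hK).closure_subset_iff.2 hseg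
    (segment_subset_closure_openSegment (left_mem_segment ℝ _ _))).2

end Slices

end Formulation

/-- Proposition 6: any closed convex set `Q ⊆ ℝⁿ × Δᵏ` that is a valid formulation of
`x ∈ ⋃ᵢ Cⁱ` contains `Q(C¹,…,Cᵏ)`, has the same recession cone, contains all Minkowski
combinations, and equals `Q(C¹,…,Cᵏ)` iff its slices agree with the Minkowski sums, iff the
central slice does. -/
theorem stmt18 {n k : ℕ} (hk : 0 < k) (C : Fin k → Set (Fin n → ℝ)) (hC : Admissible C)
    (Q : Set ((Fin n → ℝ) × (Fin k → ℝ))) (hQc : IsClosed Q) (hQconv : Convex ℝ Q)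
    (hQsub : Q ⊆ {p | (∀ i, 0 ≤ p.2 i) ∧ ∑ i, p.2 i = 1})
    (hQint : ∀ (x : Fin n → ℝ) (y : Fin k → ℝ), (∀ i, ∃ z : ℤ, y i = z) →
      ((x, y) ∈ Q ↔ ∃ i, y = Pi.single i 1 ∧ x ∈ C i)) :
    (CayleyQ C ⊆ Q) ∧
    (recCone Q = recCone (CayleyQ C) ∧
      recCone Q = {p : (Fin n → ℝ) × (Fin k → ℝ) |
        p.1 ∈ recCone (C ⟨0, hk⟩) ∧ p.2 = 0}) ∧
    (∀ y : Fin k → ℝ, ((∀ i, 0 ≤ y i) ∧ ∑ i, y i = 1) →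
      ∀ x ∈ ∑ i, y i • C i, (x, y) ∈ Q) ∧
    ((Q = CayleyQ C ↔
        ∀ y : Fin k → ℝ, ((∀ i, 0 ≤ y i) ∧ ∑ i, y i = 1) →
          ∀ x : Fin n → ℝ, (x, y) ∈ Q → x ∈ ∑ i, y i • C i) ∧
     (Q = CayleyQ C ↔
        ∀ x : Fin n → ℝ, (x, fun _ => 1 / (k : ℝ)) ∈ Q →
          x ∈ ((1 : ℝ) / k) • ∑ i, C i)) := by
  obtain ⟨hne, hcl, hconv, hrec⟩ := hC
  have hK : ∀ i, recessionCone (C i) = recessionCone (C ⟨0, hk⟩) :=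
    fun i => SetLike.coe_injective (hrec i _)
  have hQC := mk_single_mem_iff_of_int hQint
  have hQΔ : Q ⊆ Prod.snd ⁻¹' stdSimplex ℝ (Fin k) := hQsub
  have hcayley : CayleyQ C = cayleySet C := convexHull_iUnion_prod_single hne hconv
  have hsub : CayleyQ C ⊆ Q := convexHull_iUnion_prod_single_subset hQconv hQC
  have hrecQ := recCone_eq_prod_zero (fun x => (hQC ⟨0, hk⟩ x).2) (hne _) hQc hQconv
    subset_rfl hQΔ (hQC _)
  have hrecCayley := recCone_eq_prod_zero (S := CayleyQ C) (i := ⟨0, hk⟩)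
    (fun x hx => subset_convexHull ℝ _ (mem_iUnion.2 ⟨_, mk_mem_prod hx rfl⟩)) (hne _)
    (hcayley ▸ isClosed_cayleySet hne hcl hconv hK) (convex_convexHull ℝ _) hsub hQΔ (hQC _)
  have hslices := eq_convexHull_iff_forall_mem_sum_smul hQconv hQC hne hconv hQΔ
  have hcentre : (fun _ => 1 / (k : ℝ)) ∈ stdSimplex ℝ (Fin k) :=
    ⟨fun _ => by positivity, by simp [(Nat.cast_pos.2 hk).ne']⟩
  refine ⟨hsub, ⟨hrecQ.trans hrecCayley.symm, hrecQ⟩, fun y hy x hx => hsub (hcayley ▸ ⟨hy, hx⟩),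
    hslices, hslices.trans ⟨fun h x hx => ?_, fun h y hy x hx => ?_⟩⟩
  · rw [Finset.smul_sum]
    exact h _ hcentre x hx
  · refine mem_sum_smul_of_mem hne hcl hconv hK hQconv hQC (fun _ => by positivity) hcentre
      (fun x hx => ?_) hQΔ hy hx
    rw [← Finset.smul_sum]
    exact h x hx
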